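/- arXiv:1512.01351 — 5 statements merged into one kernel-verified Lean document; each statement's English description precedes it below -/
import Mathlib

section
/- Let K be a field of characteristic 0 and d ≥ 1. Equip R = K[x₁,…,x_d] × (K[x₁,…,x_d])^d with the commutative multiplication (g,c)·(h,c′) = (gh, (g c′_i + h c_i)_{i=1,…,d}) and the bracket [(g,c),(h,c′)] = (0, (c_i·E(h) − c′_i·E(g))_{i=1,…,d}), where E(h) = Σ_{j=1}^d x_j ∂h/∂x_j. Then the Leibniz rule holds: [u·v, w] = [u,w]·v + u·[v,w] for all u, v, w ∈ R; hence R is a Poisson algebra. -/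
open MvPolynomial

/-- The Euler operator `E(h) = Σ_j x_j ∂h/∂x_j`. -/
noncomputable def eulerOp {K : Type*} [Field K] {d : ℕ}
    (h : MvPolynomial (Fin d) K) : MvPolynomial (Fin d) K :=
  ∑ j : Fin d, X j * pderiv j h

/-- The bracket on `R = K[x₁,…,x_d] × (K[x₁,…,x_d])^d`:
`[(g,c),(h,c′)] = (0, (c_i·E(h) − c′_i·E(g))_i)`. -/
noncomputable def rdBracket {K : Type*} [Field K] {d : ℕ}
    (u v : MvPolynomial (Fin d) K × (Fin d → MvPolynomial (Fin d) K)) :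
    MvPolynomial (Fin d) K × (Fin d → MvPolynomial (Fin d) K) :=
  (0, fun i => u.2 i * eulerOp v.1 - v.2 i * eulerOp u.1)

/-- The commutative multiplication on `R`: `(g,c)·(h,c′) = (gh, (g c′_i + h c_i)_i)`,
the trivial square-zero extension of `K[x₁,…,x_d]` by its free module of rank `d`. -/
noncomputable def rdMul {K : Type*} [Field K] {d : ℕ}
    (u v : MvPolynomial (Fin d) K × (Fin d → MvPolynomial (Fin d) K)) :
    MvPolynomial (Fin d) K × (Fin d → MvPolynomial (Fin d) K) :=
  (u.1 * v.1, fun i => u.1 * v.2 i + v.1 * u.2 i)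

lemma eulerOp_mul {K : Type*} [Field K] {d : ℕ} (g h : MvPolynomial (Fin d) K) :
    eulerOp (g * h) = g * eulerOp h + h * eulerOp g := by
  simp only [eulerOp, Finset.mul_sum, ← Finset.sum_add_distrib, pderiv_mul]
  exact Finset.sum_congr rfl fun j _ => by ring

theorem stmt_4_general {K : Type*} [Field K] {d : ℕ}
    (u v w : MvPolynomial (Fin d) K × (Fin d → MvPolynomial (Fin d) K)) :
    rdBracket (rdMul u v) w = rdMul (rdBracket u w) v + rdMul u (rdBracket v w) := by
  refine Prod.ext ?_ (funext fun i => ?_)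
  · simp [rdBracket, rdMul]
  · simp only [rdBracket, rdMul, Prod.snd_add, Pi.add_apply, eulerOp_mul]
    ring

/-- The Leibniz rule `[u·v, w] = [u,w]·v + u·[v,w]` holds on `R`;
hence `R` is a Poisson algebra. -/
theorem stmt_4 {K : Type*} [Field K] [CharZero K] {d : ℕ} (hd : 1 ≤ d)
    (u v w : MvPolynomial (Fin d) K × (Fin d → MvPolynomial (Fin d) K)) :
    rdBracket (rdMul u v) w = rdMul (rdBracket u w) v + rdMul u (rdBracket v w) :=
  stmt_4_general u v w
end

section
/- Let K be a field of characteristic 0 and let f ∈ K[x₀,x₁,x₂]. Suppose that for every matrix (a b; c d) ∈ SL₂(K), the substitution x₀ ↦ a²x₀ + 2ac x₁ + c²x₂, x₁ ↦ ab x₀ + (ad+bc) x₁ + cd x₂, x₂ ↦ b²x₀ + 2bd x₁ + d²x₂ fixes f. Then f lies in the K-subalgebra generated by the discriminant x₁² − x₀x₂, i.e., f = p(x₁² − x₀x₂) for some univariate polynomial p over K. (That is, K[X₃]^{SL₂(K)} = K[x₁² − x₀x₂] when KX₃ ≅ V₂.) -/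
/-!
A binary quadratic form with leading coefficient `a² ≠ 0` is the image under `(a, x₁/a; 0, a⁻¹)`
of `u₁² − D u₂²`, where `D = x₁² − x₀x₂` is its discriminant; so an invariant `f`
agrees at such points with `p(D)`, where `p(t) := f(1, 0, −t)`. As `x₀` need not be a square,
compare `f` and `p(x₁² − x₀x₂)` after the injective substitution `xᵢ ↦ xᵢ²`: the results agree
wherever no coordinate vanishes, a Zariski-dense set since `K` is infinite.
-/

open MvPolynomial

section

variable {K : Type*} [Field K]

def IsSL2Invariant (f : MvPolynomial (Fin 3) K) : Prop :=
  ∀ a b c d : K, a * d - b * c = 1 →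
    aeval ![C (a ^ 2) * X 0 + C (2 * a * c) * X 1 + C (c ^ 2) * X 2,
            C (a * b) * X 0 + C (a * d + b * c) * X 1 + C (c * d) * X 2,
            C (b ^ 2) * X 0 + C (2 * b * d) * X 1 + C (d ^ 2) * X 2] f = f

theorem MvPolynomial.eval_aeval {σ τ R : Type*} [CommSemiring R] (x : τ → R)
    (v : σ → MvPolynomial τ R) (p : MvPolynomial σ R) :
    eval x (aeval v p) = eval (fun i => eval x (v i)) p :=
  eval₂Hom_bind₁ _ _ _ _

namespace IsSL2Invariant

variable {f : MvPolynomial (Fin 3) K}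

theorem eval_eq (hf : IsSL2Invariant f) (x : Fin 3 → K) {a b c d : K}
    (h : a * d - b * c = 1) :
    eval ![a ^ 2 * x 0 + 2 * a * c * x 1 + c ^ 2 * x 2,
           a * b * x 0 + (a * d + b * c) * x 1 + c * d * x 2,
           b ^ 2 * x 0 + 2 * b * d * x 1 + d ^ 2 * x 2] f = eval x f := by
  conv_rhs => rw [← hf a b c d h, eval_aeval]
  congr 2
  funext i; fin_cases i <;> simp

theorem eval_eq_eval_normalForm (hf : IsSL2Invariant f) {y : Fin 3 → K} {a : K} (ha : a ≠ 0)
    (hy : y 0 = a ^ 2) : eval y f = eval ![1, 0, -(y 1 ^ 2 - y 0 * y 2)] f := by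
  rw [← hf.eval_eq ![1, 0, -(y 1 ^ 2 - y 0 * y 2)] (a := a) (b := y 1 / a) (c := 0)
    (d := a⁻¹) (by field_simp; ring)]
  congr 2
  funext i; fin_cases i <;> simp [hy]
  · field_simp
  · field_simp; ring

end IsSL2Invariant

noncomputable def normalFormRestriction (f : MvPolynomial (Fin 3) K) : Polynomial K :=
  aeval ![1, 0, -Polynomial.X] f

theorem eval_aeval_normalFormRestriction (f : MvPolynomial (Fin 3) K) (y : Fin 3 → K) :
    eval y (Polynomial.aeval (X 1 ^ 2 - X 0 * X 2 : MvPolynomial (Fin 3) K)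
      (normalFormRestriction f)) = eval ![1, 0, -(y 1 ^ 2 - y 0 * y 2)] f := by
  change aeval y _ = aeval _ f
  rw [normalFormRestriction, ← Polynomial.aeval_algHom_apply, comp_aeval_apply]
  congr 2
  funext i; fin_cases i <;> simp

end

/-- `K[X₃]^{SL₂(K)} = K[x₁² − x₀x₂]` when `KX₃ ≅ V₂`: a polynomial fixed by every
`SL₂(K)`-substitution on the coefficients of a binary quadratic form is a polynomial
in the discriminant `x₁² − x₀x₂`. -/
theorem stmt_11 {K : Type*} [Field K] [CharZero K] (f : MvPolynomial (Fin 3) K)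
    (hf : ∀ a b c d : K, a * d - b * c = 1 →
      aeval ![C (a ^ 2) * X 0 + C (2 * a * c) * X 1 + C (c ^ 2) * X 2,
              C (a * b) * X 0 + C (a * d + b * c) * X 1 + C (c * d) * X 2,
              C (b ^ 2) * X 0 + C (2 * b * d) * X 1 + C (d ^ 2) * X 2] f = f) :
    ∃ p : Polynomial K,
      f = Polynomial.aeval ((X 1) ^ 2 - X 0 * X 2 : MvPolynomial (Fin 3) K) p := by
  refine ⟨normalFormRestriction f, ?_⟩
  rw [← expand_inj two_pos]
  refine funext_set (fun _ => {0}ᶜ) (fun _ => (Set.finite_singleton 0).infinite_compl)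
    fun x hx => ?_
  rw [eval_expand, eval_expand, eval_aeval_normalFormRestriction,
    IsSL2Invariant.eval_eq_eval_normalForm hf (hx 0 trivial) rfl]
end

section
/- Let K be a field of characteristic 0 and let c = (c₀, c₁) be a pair of polynomials in K[x₀,x₁] such that x₀c₀ + x₁c₁ = 0 and such that for every (a b; c d) ∈ SL₂(K), writing σ for the substitution x₀ ↦ a x₀ + c x₁, x₁ ↦ b x₀ + d x₁, one has a·σ(c₀) + b·σ(c₁) = c₀ and c·σ(c₀) + d·σ(c₁) = c₁. Then there exists λ ∈ K with c₀ = −λ x₁ and c₁ = λ x₀. (That is, when KX₂ ≅ V₁, the space (F₂′)^{SL₂(K)} is the one-dimensional span of the commutator [x₂,x₁], which corresponds to the tuple (−x₁, x₀).) -/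
/-!
Writing `x₀c₀ + x₁c₁ = 0` as `c = (-x₁w, x₀w)` (possible since `x₀` is prime and does not divide
`x₁`), the invariance of `c` becomes the invariance of the polynomial `w` under all substitutions
from `SL₂(K)`. As `SL₂(K)` acts transitively on `K² ∖ {0}`, the polynomial function of `w` is
constant off the origin, so `w` is a constant because `K` is infinite.
-/

open MvPolynomial

namespace MvPolynomial

section Syzygy

variable {σ R : Type*} [CommRing R] [IsDomain R]

theorem exists_eq_neg_X_mul_of_X_mul_add_X_mul_eq_zero {i j : σ} (hij : i ≠ j)
    {p q : MvPolynomial σ R} (h : X i * p + X j * q = 0) :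
    ∃ w, p = -(X j * w) ∧ q = X i * w := by
  have hdvd : X i ∣ X j * q := ⟨-p, by linear_combination h⟩
  obtain ⟨w, rfl⟩ := (X_prime.dvd_or_dvd hdvd).resolve_left (mt X_dvd_X.mp hij)
  exact ⟨w, mul_left_cancel₀ (X_ne_zero i) (by linear_combination h), rfl⟩

end Syzygy

section LinearSubst

variable {R : Type*} [CommRing R]

/-- The substitution `σ_g` for `g = (a b; c d)`. -/
noncomputable def linearSubst (a b c d : R) : MvPolynomial (Fin 2) R →ₐ[R] MvPolynomial (Fin 2) R :=
  aeval ![C a * X 0 + C c * X 1, C b * X 0 + C d * X 1]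

@[simp]
theorem linearSubst_X_zero (a b c d : R) : linearSubst a b c d (X 0) = C a * X 0 + C c * X 1 :=
  aeval_X _ _

@[simp]
theorem linearSubst_X_one (a b c d : R) : linearSubst a b c d (X 1) = C b * X 0 + C d * X 1 :=
  aeval_X _ _

theorem eval_linearSubst (a b c d : R) (p : Fin 2 → R) (w : MvPolynomial (Fin 2) R) :
    eval p (linearSubst a b c d w) = eval ![a * p 0 + c * p 1, b * p 0 + d * p 1] w := by
  refine (comp_aeval_apply _ (aeval p) w).trans (congrArg (fun q => eval q w) ?_)
  ext i
  fin_cases i <;> simp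

theorem linearSubst_eq_self_of_det_eq_one [IsDomain R] {a b c d : R} (had : a * d - b * c = 1)
    {w : MvPolynomial (Fin 2) R}
    (h : C c * linearSubst a b c d (-(X 1 * w)) + C d * linearSubst a b c d (X 0 * w) = X 0 * w) :
    linearSubst a b c d w = w := by
  have hdet : (C a * C d - C b * C c : MvPolynomial (Fin 2) R) = 1 := by
    rw [← C_mul, ← C_mul, ← C_sub, had, C_1]
  simp only [map_neg, map_mul, linearSubst_X_zero, linearSubst_X_one] at h
  apply mul_left_cancel₀ (X_ne_zero (R := R) (0 : Fin 2))
  linear_combination h - X 0 * linearSubst a b c d w * hdet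

end LinearSubst

section Invariants

variable {K : Type*} [Field K] {w : MvPolynomial (Fin 2) K}

theorem eval_eq_eval_one_zero_of_forall_linearSubst_eq
    (hw : ∀ a b c d : K, a * d - b * c = 1 → linearSubst a b c d w = w)
    {p : Fin 2 → K} (hp : p 0 ≠ 0) : eval p w = eval ![1, 0] w := by
  have h := eval_linearSubst (p 0) (p 1) 0 (p 0)⁻¹ ![1, 0] w
  rw [hw _ _ _ _ (by field_simp; ring)] at h
  rw [h]
  refine congrArg (fun q => eval q w) ?_
  ext i
  fin_cases i <;> simp

theorem eq_C_of_forall_linearSubst_eq [Infinite K]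
    (hw : ∀ a b c d : K, a * d - b * c = 1 → linearSubst a b c d w = w) :
    w = C (eval ![1, 0] w) := by
  -- the factor `x₀` makes both sides vanish at the origin, where the previous lemma says nothing
  refine mul_left_cancel₀ (X_ne_zero (R := K) (0 : Fin 2)) (funext fun p => ?_)
  simp only [eval_mul, eval_X, eval_C]
  by_cases hp : p 0 = 0
  · simp [hp]
  · rw [eval_eq_eval_one_zero_of_forall_linearSubst_eq hw hp]

end Invariants

end MvPolynomial

/-- When `KX₂ ≅ V₁`, the space `(F₂′)^{SL₂(K)}` is one-dimensional, spanned by the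
commutator `[x₂,x₁]`: a tuple `v = (v₀,v₁)` of polynomials with `x₀v₀ + x₁v₁ = 0`
(Shmel'kin's identification of `F₂′`) fixed by every element of `SL₂(K)` is a scalar
multiple of the tuple `(−x₁, x₀)` corresponding to `[x₂,x₁]`. -/
theorem stmt_14 {K : Type*} [Field K] [CharZero K]
    (v : Fin 2 → MvPolynomial (Fin 2) K)
    (hrel : X 0 * v 0 + X 1 * v 1 = 0)
    (hinv : ∀ a b c d : K, a * d - b * c = 1 →
      C a * aeval ![C a * X 0 + C c * X 1, C b * X 0 + C d * X 1] (v 0) +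
        C b * aeval ![C a * X 0 + C c * X 1, C b * X 0 + C d * X 1] (v 1) = v 0 ∧
      C c * aeval ![C a * X 0 + C c * X 1, C b * X 0 + C d * X 1] (v 0) +
        C d * aeval ![C a * X 0 + C c * X 1, C b * X 0 + C d * X 1] (v 1) = v 1) :
    ∃ lam : K, v 0 = -(C lam * X 1) ∧ v 1 = C lam * X 0 := by
  obtain ⟨w, hv0, hv1⟩ := exists_eq_neg_X_mul_of_X_mul_add_X_mul_eq_zero (by decide) hrel
  have hw : ∀ a b c d : K, a * d - b * c = 1 → linearSubst a b c d w = w := fun a b c d had =>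
    linearSubst_eq_self_of_det_eq_one had (by rw [← hv0, ← hv1]; exact (hinv a b c d had).2)
  obtain ⟨lam, rfl⟩ : ∃ lam, w = C lam := ⟨_, eq_C_of_forall_linearSubst_eq hw⟩
  exact ⟨lam, by rw [hv0, mul_comm], by rw [hv1, mul_comm]⟩
end

section
/- Let K be a field of characteristic 0. Consider the tuple c = (x₂x₃, −2x₁x₃, x₀x₃, 2x₁² − 2x₀x₂) of polynomials in K[x₀,x₁,x₂,x₃]. Then Σ_{i=0}^3 x_i c_i = 0, and for every (a b; c d) ∈ SL₂(K), writing σ for the substitution x₀ ↦ a²x₀ + 2ac x₁ + c²x₂, x₁ ↦ ab x₀ + (ad+bc)x₁ + cd x₂, x₂ ↦ b²x₀ + 2bd x₁ + d²x₂, x₃ ↦ x₃, and M for the 4×4 block-diagonal matrix with the V₂-block (columns (a²,2ac,c²), (ab,ad+bc,cd), (b²,2bd,d²)) and the 1×1 block (1), one has Σ_i M_{j i} σ(c_i) = c_j for all j. (That is, v₂₀ = 2[x₄,x₂,x₂] − [x₄,x₁,x₃] − [x₄,x₃,x₁] is a nonzero SL₂(K)-invariant in F₄′ when KX₄ ≅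 V₂ ⊕ V₀.) -/
open MvPolynomial

/-! The last coordinate is `-2` times the discriminant `x₀x₂ - x₁²` of the binary quadratic form
`x₀ s² + 2x₁ st + x₂ t²`, which a substitution of determinant `δ` multiplies by `δ²`, while the
first three coordinates are `x₃` times the dual coordinates `(x₂, -2x₁, x₀)`, on which the same
substitution again acts by `δ²`. Over any commutative ring the tuple is therefore a semi-invariant
of weight `(ad - bc)²`, hence invariant under `SL₂`. -/

namespace V20

variable {R : Type*} [CommRing R]

/-- Shmel'kin's tuple of `v₂₀ = 2[x₄,x₂,x₂] − [x₄,x₁,x₃] − [x₄,x₃,x₁]`. -/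
noncomputable def tuple : Fin 4 → MvPolynomial (Fin 4) R :=
  ![X 2 * X 3, -2 * X 1 * X 3, X 0 * X 3, 2 * X 1 ^ 2 - 2 * X 0 * X 2]

/-- The substitution induced on `V₂ ⊕ V₀` by `(a b; c d)`. -/
noncomputable def subst (a b c d : R) : Fin 4 → MvPolynomial (Fin 4) R :=
  ![C (a ^ 2) * X 0 + C (2 * a * c) * X 1 + C (c ^ 2) * X 2,
    C (a * b) * X 0 + C (a * d + b * c) * X 1 + C (c * d) * X 2,
    C (b ^ 2) * X 0 + C (2 * b * d) * X 1 + C (d ^ 2) * X 2,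
    X 3]

def actionMatrix (a b c d : R) : Fin 4 → Fin 4 → R :=
  ![![a ^ 2, a * b, b ^ 2, 0],
    ![2 * a * c, a * d + b * c, 2 * b * d, 0],
    ![c ^ 2, c * d, d ^ 2, 0],
    ![0, 0, 0, 1]]

theorem sum_X_mul_tuple : ∑ i, X i * tuple (R := R) i = 0 := by
  simp only [tuple, Fin.sum_univ_four, Matrix.cons_val_zero, Matrix.cons_val_one, Matrix.cons_val]
  ring

theorem sum_actionMatrix_mul_aeval_tuple (a b c d : R) (j : Fin 4) :
    ∑ i, C (actionMatrix a b c d j i) * aeval (subst a b c d) (tuple (R := R) i) =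
      C ((a * d - b * c) ^ 2) * tuple j := by
  fin_cases j <;>
  · simp only [actionMatrix, subst, tuple, Fin.sum_univ_four, Fin.isValue, Fin.zero_eta,
      Fin.mk_one, Fin.reduceFinMk, Matrix.cons_val', Matrix.cons_val_fin_one, Matrix.cons_val_zero,
      Matrix.cons_val_one, Matrix.cons_val, aeval_eq_bind₁, bind₁_X_right, map_mul, map_add,
      map_sub, map_neg, map_pow, map_ofNat, C_0, C_1]
    ring

end V20

theorem stmt_16_general {K : Type*} [Field K] :
    let v : Fin 4 → MvPolynomial (Fin 4) K :=
      ![X 2 * X 3, -2 * X 1 * X 3, X 0 * X 3, 2 * X 1 ^ 2 - 2 * X 0 * X 2]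
    (∑ i, X i * v i = 0) ∧
    (∀ a b c d : K, a * d - b * c = 1 →
      ∀ j, ∑ i, C ((![![a ^ 2, a * b, b ^ 2, 0],
                      ![2 * a * c, a * d + b * c, 2 * b * d, 0],
                      ![c ^ 2, c * d, d ^ 2, 0],
                      ![0, 0, 0, 1]] : Fin 4 → Fin 4 → K) j i) *
        aeval ![C (a ^ 2) * X 0 + C (2 * a * c) * X 1 + C (c ^ 2) * X 2,
                C (a * b) * X 0 + C (a * d + b * c) * X 1 + C (c * d) * X 2,
                C (b ^ 2) * X 0 + C (2 * b * d) * X 1 + C (d ^ 2) * X 2,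
                X 3] (v i) = v j) := by
  refine ⟨V20.sum_X_mul_tuple, fun a b c d hdet j => ?_⟩
  have := V20.sum_actionMatrix_mul_aeval_tuple a b c d j
  rwa [hdet, one_pow, map_one, one_mul] at this

/-- The element `v₂₀ = 2[x₄,x₂,x₂] − [x₄,x₁,x₃] − [x₄,x₃,x₁]`, encoded via Shmel'kin's
embedding as the tuple `c = (x₂x₃, −2x₁x₃, x₀x₃, 2x₁² − 2x₀x₂)`, satisfies
`Σ_i x_i c_i = 0` and is an `SL₂(K)`-invariant in `F₄′` when `KX₄ ≅ V₂ ⊕ V₀`. -/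
theorem stmt_16 {K : Type*} [Field K] [CharZero K] :
    let v : Fin 4 → MvPolynomial (Fin 4) K :=
      ![X 2 * X 3, -2 * X 1 * X 3, X 0 * X 3, 2 * X 1 ^ 2 - 2 * X 0 * X 2]
    (∑ i, X i * v i = 0) ∧
    (∀ a b c d : K, a * d - b * c = 1 →
      ∀ j, ∑ i, C ((![![a ^ 2, a * b, b ^ 2, 0],
                      ![2 * a * c, a * d + b * c, 2 * b * d, 0],
                      ![c ^ 2, c * d, d ^ 2, 0],
                      ![0, 0, 0, 1]] : Fin 4 → Fin 4 → K) j i) *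
        aeval ![C (a ^ 2) * X 0 + C (2 * a * c) * X 1 + C (c ^ 2) * X 2,
                C (a * b) * X 0 + C (a * d + b * c) * X 1 + C (c * d) * X 2,
                C (b ^ 2) * X 0 + C (2 * b * d) * X 1 + C (d ^ 2) * X 2,
                X 3] (v i) = v j) :=
  stmt_16_general
end

section
/- Let K be a field of characteristic 0. Consider the tuple c = (−x₃, 3x₂, −3x₁, x₀) of polynomials in K[x₀,x₁,x₂,x₃]. Then Σ_{i=0}^3 x_i c_i = 0, and for every (a b; c d) ∈ SL₂(K), writing σ for the binary cubic substitution x₀ ↦ a³x₀ + 3a²c x₁ + 3ac² x₂ + c³x₃, x₁ ↦ a²b x₀ + (a²d + 2abc) x₁ + (2acd + bc²) x₂ + c²d x₃, x₂ ↦ ab² x₀ + (2abd + b²c) x₁ + (ad² + 2bcd) x₂ + cd² x₃, x₃ ↦ b³x₀ + 3b²d x₁ + 3bd² x₂ + d³x₃, and M for the matrix whose columns are given by these same formulas, one has Σ_i M_{j i} σ(c_i) = c_j for all j. (That is, v = [x₄,x₁] − 3[x₃,x₂] is a nonzero SL₂(K)-invariant generating the free cyclic K[X₄]^{SL₂(K)}-module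 (F₄′)^{SL₂(K)} when KX₄ ≅ V₃.) -/
/-!
Write `J` for the Gram matrix of the `SL₂`-invariant symplectic form on binary cubics, so that
the tuple is `J x`. The substitution `σ` sends the column of variables `x` to `Mᵀ x`, hence
`g · (J x) = M J Mᵀ x`, and `M J Mᵀ = det(g)³ J` because `M` is the third symmetric power
of `g`.
-/

open MvPolynomial

section

open Matrix

theorem aeval_mulVec_X {R σ ι S : Type*} [CommSemiring R] [Fintype σ] [CommSemiring S]
    [Algebra R S]
    (A : Matrix ι σ R) (f : σ → S) (i : ι) :
    aeval f ((A.map C *ᵥ X) i) = (A.map (algebraMap R S) *ᵥ f) i := by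
  simp [mulVec, dotProduct, aeval_X]

theorem mulVec_aeval_mulVec_X {R n : Type*} [CommSemiring R] [Fintype n] (M A : Matrix n n R) :
    M.map C *ᵥ (fun i => aeval (Mᵀ.map C *ᵥ X) ((A.map C *ᵥ X) i)) =
      (M * A * Mᵀ).map C *ᵥ (X : n → MvPolynomial n R) := by
  simp only [aeval_mulVec_X, algebraMap_eq, mulVec_mulVec, Matrix.map_mul, transpose_map,
    Matrix.mul_assoc]

variable {R : Type*} [CommRing R]

def cubicRep (a b c d : R) : Matrix (Fin 4) (Fin 4) R :=
  !![a ^ 3, a ^ 2 * b, a * b ^ 2, b ^ 3;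
     3 * a ^ 2 * c, a ^ 2 * d + 2 * a * b * c, 2 * a * b * d + b ^ 2 * c, 3 * b ^ 2 * d;
     3 * a * c ^ 2, 2 * a * c * d + b * c ^ 2, a * d ^ 2 + 2 * b * c * d, 3 * b * d ^ 2;
     c ^ 3, c ^ 2 * d, c * d ^ 2, d ^ 3]

def cubicSymplectic : Matrix (Fin 4) (Fin 4) R :=
  !![0, 0, 0, -1; 0, 0, 3, 0; 0, -3, 0, 0; 1, 0, 0, 0]

theorem cubicRep_mul_cubicSymplectic_mul_transpose (a b c d : R) :
    cubicRep a b c d * cubicSymplectic * (cubicRep a b c d)ᵀ =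
      (a * d - b * c) ^ 3 • cubicSymplectic := by
  ext i j
  fin_cases i <;> fin_cases j <;>
    simp [cubicRep, cubicSymplectic, Matrix.mul_apply, Fin.sum_univ_four] <;> ring

theorem cubicRep_transpose_map_C_mulVec_X (a b c d : R) :
    (cubicRep a b c d)ᵀ.map C *ᵥ (X : Fin 4 → MvPolynomial (Fin 4) R) =
      ![C (a ^ 3) * X 0 + C (3 * a ^ 2 * c) * X 1
          + C (3 * a * c ^ 2) * X 2 + C (c ^ 3) * X 3,
        C (a ^ 2 * b) * X 0 + C (a ^ 2 * d + 2 * a * b * c) * X 1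
          + C (2 * a * c * d + b * c ^ 2) * X 2 + C (c ^ 2 * d) * X 3,
        C (a * b ^ 2) * X 0 + C (2 * a * b * d + b ^ 2 * c) * X 1
          + C (a * d ^ 2 + 2 * b * c * d) * X 2 + C (c * d ^ 2) * X 3,
        C (b ^ 3) * X 0 + C (3 * b ^ 2 * d) * X 1
          + C (3 * b * d ^ 2) * X 2 + C (d ^ 3) * X 3] := by
  ext1 k
  fin_cases k <;> simp [cubicRep, mulVec, dotProduct, Fin.sum_univ_four]

end

theorem stmt_18_general {K : Type*} [Field K] :
    let v : Fin 4 → MvPolynomial (Fin 4) K := ![-X 3, 3 * X 2, -3 * X 1, X 0]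
    (∑ i, X i * v i = 0) ∧
    (∀ a b c d : K, a * d - b * c = 1 →
      ∀ j, ∑ i, C ((![![a ^ 3, a ^ 2 * b, a * b ^ 2, b ^ 3],
                      ![3 * a ^ 2 * c, a ^ 2 * d + 2 * a * b * c,
                        2 * a * b * d + b ^ 2 * c, 3 * b ^ 2 * d],
                      ![3 * a * c ^ 2, 2 * a * c * d + b * c ^ 2,
                        a * d ^ 2 + 2 * b * c * d, 3 * b * d ^ 2],
                      ![c ^ 3, c ^ 2 * d, c * d ^ 2, d ^ 3]] : Fin 4 → Fin 4 → K) j i) *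
        aeval ![C (a ^ 3) * X 0 + C (3 * a ^ 2 * c) * X 1
                  + C (3 * a * c ^ 2) * X 2 + C (c ^ 3) * X 3,
                C (a ^ 2 * b) * X 0 + C (a ^ 2 * d + 2 * a * b * c) * X 1
                  + C (2 * a * c * d + b * c ^ 2) * X 2 + C (c ^ 2 * d) * X 3,
                C (a * b ^ 2) * X 0 + C (2 * a * b * d + b ^ 2 * c) * X 1
                  + C (a * d ^ 2 + 2 * b * c * d) * X 2 + C (c * d ^ 2) * X 3,
                C (b ^ 3) * X 0 + C (3 * b ^ 2 * d) * X 1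
                  + C (3 * b * d ^ 2) * X 2 + C (d ^ 3) * X 3] (v i) = v j) := by
  intro v
  have hv : v = (cubicSymplectic.map C).mulVec X := by
    ext1 i
    fin_cases i <;> simp [v, cubicSymplectic, Matrix.mulVec, dotProduct, Fin.sum_univ_four] <;>
      exact (map_ofNat C 3).symm
  refine ⟨by simp [v, Fin.sum_univ_four]; ring, fun a b c d hdet j => ?_⟩
  have hcongr := congrFun (mulVec_aeval_mulVec_X (cubicRep a b c d) cubicSymplectic) j
  rw [cubicRep_mul_cubicSymplectic_mul_transpose, hdet, one_pow, one_smul, ← hv] at hcongr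
  rwa [cubicRep_transpose_map_C_mulVec_X] at hcongr

/-- The element `v = [x₄,x₁] − 3[x₃,x₂]`, encoded via Shmel'kin's embedding as the
tuple `c = (−x₃, 3x₂, −3x₁, x₀)`, satisfies `Σ_i x_i c_i = 0` and is an
`SL₂(K)`-invariant in `F₄′` when `KX₄ ≅ V₃` (binary cubic forms); it generates the
free cyclic `K[X₄]^{SL₂(K)}`-module `(F₄′)^{SL₂(K)}`. -/
theorem stmt_18 {K : Type*} [Field K] [CharZero K] :
    let v : Fin 4 → MvPolynomial (Fin 4) K := ![-X 3, 3 * X 2, -3 * X 1, X 0]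
    (∑ i, X i * v i = 0) ∧
    (∀ a b c d : K, a * d - b * c = 1 →
      ∀ j, ∑ i, C ((![![a ^ 3, a ^ 2 * b, a * b ^ 2, b ^ 3],
                      ![3 * a ^ 2 * c, a ^ 2 * d + 2 * a * b * c,
                        2 * a * b * d + b ^ 2 * c, 3 * b ^ 2 * d],
                      ![3 * a * c ^ 2, 2 * a * c * d + b * c ^ 2,
                        a * d ^ 2 + 2 * b * c * d, 3 * b * d ^ 2],
                      ![c ^ 3, c ^ 2 * d, c * d ^ 2, d ^ 3]] : Fin 4 → Fin 4 → K) j i) *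
        aeval ![C (a ^ 3) * X 0 + C (3 * a ^ 2 * c) * X 1
                  + C (3 * a * c ^ 2) * X 2 + C (c ^ 3) * X 3,
                C (a ^ 2 * b) * X 0 + C (a ^ 2 * d + 2 * a * b * c) * X 1
                  + C (2 * a * c * d + b * c ^ 2) * X 2 + C (c ^ 2 * d) * X 3,
                C (a * b ^ 2) * X 0 + C (2 * a * b * d + b ^ 2 * c) * X 1
                  + C (a * d ^ 2 + 2 * b * c * d) * X 2 + C (c * d ^ 2) * X 3,
                C (b ^ 3) * X 0 + C (3 * b ^ 2 * d) * X 1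
                  + C (3 * b * d ^ 2) * X 2 + C (d ^ 3) * X 3] (v i) = v j) :=
  stmt_18_general
end
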